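/- arXiv:2401.00156 — 5 statements merged into one kernel-verified Lean document; each statement's English description precedes it below -/
import Mathlib

section
/- Let p be a prime and let N be a nilpotent normal subgroup of a finite group G such that the largest normal p'-subgroup O_{p'}(N) of N (equivalently, the unique Hall p'-subgroup of the nilpotent group N) is contained in the center Z(G). Then the map R ↦ RN/N is a bijection from the set of radical p-subgroups of G onto the set of radical p-subgroups of G/N. -/
/-!
Since `N` is nilpotent, `N = O_p(N) Z` with `Z = O_{p'}(N)` central. A radical `p`-subgroup `R`
contains the normal `p`-subgroup `O_p(N)`: in the `p`-group `R O_p(N)` the normalizer of `R` is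
`R (O_p(N) ∩ N_G(R)) = R`, so `R = R O_p(N)`. Hence `RN = R × Z`, whose `p`-elements are exactly
those of `R`; so `R` is determined by `RN/N`, and `N_G(RN) = N_G(R)`. The remaining ingredient is
`O_p(H/N) = O_p(H)N/N` for `N ≤ H`: the preimage `K` of `O_p(H/N)` is generated by a `p`-subgroup,
`O_p(N)` and the central `Z`, so `K = O_p(K) Z`, and `O_p(K) ≤ O_p(H)` because `H` normalizes `K`.
-/

/-- The largest normal `p`-subgroup `O_p(G)` of a group `G`:
the join of all normal `p`-subgroups of `G`. -/
def pCore' (p : ℕ) (G : Type*) [Group G] : Subgroup G :=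
  sSup {H : Subgroup G | H.Normal ∧ IsPGroup p H}

/-- `Q` is a radical `p`-subgroup of `G` if `Q = O_p(N_G(Q))`. -/
def IsRadicalPSubgroup (p : ℕ) {G : Type*} [Group G] (Q : Subgroup G) : Prop :=
  Q.subgroupOf (Subgroup.normalizer (Q : Set G)) = pCore' p (Subgroup.normalizer (Q : Set G))

/-- The largest normal `p'`-subgroup `O_{p'}(G)` of a finite group `G`:
the join of all normal subgroups of order coprime to `p`. -/
def pPrimeCore (p : ℕ) (G : Type*) [Group G] : Subgroup G :=
  sSup {H : Subgroup G | H.Normal ∧ ¬ p ∣ Nat.card H}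

open Subgroup

section pCore'

variable {G : Type*} [Group G] {p : ℕ}

theorem pCore'_normal : (pCore' p G).Normal :=
  sSup_normal _ fun _ h => h.1

theorem isPGroup_pCore' : IsPGroup p (pCore' p G) :=
  Sylow.sSup_of_normal _ (fun _ h => h.2) fun _ h => h.1

theorem le_pCore' {H : Subgroup G} [hH : H.Normal] (h : IsPGroup p H) : H ≤ pCore' p G :=
  le_sSup ⟨hH, h⟩

end pCore'

namespace Subgroup

variable {G : Type*} [Group G] {p : ℕ}

/-- `O_p(H)`, as a subgroup of the ambient group. -/
def pCore (p : ℕ) (H : Subgroup G) : Subgroup G :=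
  (pCore' p H).map H.subtype

variable {H K : Subgroup G}

theorem pCore_le : H.pCore p ≤ H :=
  map_subtype_le _

theorem isPGroup_pCore : IsPGroup p (H.pCore p) :=
  isPGroup_pCore'.map _

theorem pCore_subgroupOf : (H.pCore p).subgroupOf H = pCore' p H :=
  comap_map_eq_self_of_injective H.subtype_injective _

theorem le_normalizer_pCore : H ≤ normalizer (H.pCore p) := by
  have := pCore'_normal (p := p) (G := H)
  rw [← pCore_subgroupOf] at this
  exact (normal_subgroupOf_iff_le_normalizer pCore_le).mp this

theorem le_pCore (hKH : K ≤ H) (hK : IsPGroup p K) (hHK : H ≤ normalizer K) :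
    K ≤ H.pCore p := by
  have : (K.subgroupOf H).Normal := (normal_subgroupOf_iff_le_normalizer hKH).mpr hHK
  have := map_mono (f := H.subtype) (le_pCore' (H := K.subgroupOf H) hK.comap_subtype)
  rwa [subgroupOf_map_subtype, inf_of_le_left hKH] at this

theorem pCore_eq_self (hH : IsPGroup p H) : H.pCore p = H :=
  pCore_le.antisymm (le_pCore le_rfl hH le_normalizer)

theorem mem_normalizer_of_map_conj_le [Finite H] {g : G} (h : H.map (MulAut.conj g) ≤ H) :
    g ∈ normalizer H :=
  mem_normalizer_iff_map_conj_eq.mpr <|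
    eq_of_le_of_card_ge h (card_map_of_injective (MulAut.conj g).injective).ge

theorem normalizer_le_normalizer_pCore [Finite G] :
    normalizer H ≤ normalizer (H.pCore p : Set G) := by
  intro g hg
  rw [mem_normalizer_iff_map_conj_eq] at hg
  refine mem_normalizer_of_map_conj_le (le_pCore ?_ (isPGroup_pCore.map _) ?_)
  · exact (map_mono pCore_le).trans_eq hg
  · calc H = H.map (MulAut.conj g) := hg.symm
      _ ≤ (normalizer (H.pCore p : Set G)).map (MulAut.conj g) := map_mono le_normalizer_pCore
      _ ≤ normalizer (((H.pCore p).map (MulAut.conj g) : Subgroup G) : Set G) :=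
        le_normalizer_map _

theorem normal_pCore [Finite G] [hH : H.Normal] : (H.pCore p).Normal := by
  rw [← normalizer_eq_top_iff, eq_top_iff, ← normalizer_eq_top_iff.mpr hH]
  exact normalizer_le_normalizer_pCore

end Subgroup

section Radical

variable {G : Type*} [Group G] {p : ℕ} {R : Subgroup G}

theorem isRadicalPSubgroup_iff : IsRadicalPSubgroup p R ↔ (normalizer R).pCore p = R := by
  rw [IsRadicalPSubgroup, ← (map_injective (normalizer (R : Set G)).subtype_injective).eq_iff,
    subgroupOf_map_subtype, inf_of_le_left le_normalizer, eq_comm]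
  rfl

theorem IsRadicalPSubgroup.isPGroup (hR : IsRadicalPSubgroup p R) : IsPGroup p R :=
  isRadicalPSubgroup_iff.mp hR ▸ isPGroup_pCore

theorem IsPGroup.le_of_inf_normalizer_le [Finite G] [Fact p.Prime] {Q : Subgroup G}
    (hQ : IsPGroup p Q) (hRQ : R ≤ Q) (h : Q ⊓ normalizer R ≤ R) : Q ≤ R := by
  have := hQ.isNilpotent
  refine subgroupOf_eq_top.mp (normalizerCondition_iff_only_full_group_self_normalizing.mp
    Group.normalizerCondition_of_isNilpotent _ ?_)
  rw [← subgroupOf_normalizer_eq hRQ]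
  exact le_antisymm (fun x hx => h ⟨x.2, hx⟩) fun x hx => le_normalizer hx

theorem IsRadicalPSubgroup.le_of_normal [Finite G] [Fact p.Prime] (hR : IsRadicalPSubgroup p R)
    {P : Subgroup G} [P.Normal] (hP : IsPGroup p P) : P ≤ R := by
  have hPR : P ⊓ normalizer R ≤ R :=
    calc P ⊓ normalizer R ≤ (normalizer R).pCore p :=
          le_pCore inf_le_right hP.to_inf_left <|
            (le_inf le_normalizer_of_normal le_normalizer).trans inf_normalizer_le_normalizer_inf
      _ = R := isRadicalPSubgroup_iff.mp hR
  refine le_sup_right.trans <|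
    (hR.isPGroup.to_sup_of_normal_right hP).le_of_inf_normalizer_le le_sup_left ?_
  rintro x ⟨hx, hxR⟩
  obtain ⟨r, hr, y, hy, rfl⟩ := mem_sup_of_normal_right.mp hx
  have hyR : y ∈ normalizer R := by simpa using mul_mem (inv_mem (le_normalizer hr)) hxR
  exact mul_mem hr (hPR ⟨hy, hyR⟩)

theorem IsRadicalPSubgroup.pCore_le [Finite G] [Fact p.Prime] (hR : IsRadicalPSubgroup p R)
    (N : Subgroup G) [N.Normal] : N.pCore p ≤ R :=
  have := normal_pCore (p := p) (H := N)
  hR.le_of_normal isPGroup_pCore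

end Radical

section Nilpotent

variable {G : Type*} [Group G] [Finite G] {p : ℕ}

theorem Subgroup.eq_top_of_forall_sylow_le {H : Subgroup G}
    (h : ∀ (q : ℕ) [Fact q.Prime], ∃ P : Sylow q G, ↑P ≤ H) : H = ⊤ :=
  eq_top_of_card_eq H <| Nat.dvd_antisymm (card_subgroup_dvd_card H) <|
    (Nat.dvd_iff_prime_pow_dvd_dvd _ _).mpr fun q k hq hqk => by
      have := Fact.mk hq
      obtain ⟨P, hP⟩ := h q
      exact (P.pow_dvd_card_of_pow_dvd_card hqk).trans (card_dvd_of_le hP)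

theorem pCore'_sup_pPrimeCore [Group.IsNilpotent G] [hp : Fact p.Prime] :
    pCore' p G ⊔ pPrimeCore p G = ⊤ := by
  refine eq_top_of_forall_sylow_le fun q _ => ?_
  obtain ⟨P⟩ : Nonempty (Sylow q G) := inferInstance
  refine ⟨P, ?_⟩
  rcases eq_or_ne q p with rfl | hqp
  · exact le_sup_of_le_left (le_pCore' P.isPGroup')
  · refine le_sup_of_le_right (le_sSup ⟨inferInstance, fun hdvd => hqp ?_⟩)
    obtain ⟨n, hn⟩ := IsPGroup.iff_card.mp P.isPGroup'
    rw [hn] at hdvd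
    exact ((Nat.prime_dvd_prime_iff_eq hp.out Fact.out).mp (hp.out.dvd_of_dvd_pow hdvd)).symm

end Nilpotent

section Coprime

variable {G : Type*} [Group G] {p : ℕ} [hp : Fact p.Prime]

theorem coprime_orderOf_of_mem_pPrimeCore
    (hcomm : ∀ x ∈ pPrimeCore p G, ∀ y ∈ pPrimeCore p G, Commute x y) {x : G}
    (hx : x ∈ pPrimeCore p G) : (orderOf x).Coprime p := by
  rw [pPrimeCore, sSup_eq_iSup'] at hcomm hx
  induction hx using iSup_induction' with
  | hp H x hx =>
    refine Nat.Coprime.coprime_dvd_left ?_ (Nat.coprime_comm.mp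
      ((Nat.Prime.coprime_iff_not_dvd hp.out).mpr H.2.2))
    simpa only [orderOf_mk] using orderOf_dvd_natCard (⟨x, hx⟩ : (H : Subgroup G))
  | h1 => simp
  | hmul x y hx hy ihx ihy =>
    exact Nat.Coprime.coprime_dvd_left (hcomm x hx y hy).orderOf_mul_dvd_mul_orderOf
      (Nat.Coprime.mul_left ihx ihy)

theorem IsPGroup.le_of_le_sup_central {A R Z : Subgroup G} (hA : IsPGroup p A)
    (hR : IsPGroup p R) (hZ : Z ≤ center G) (hZp : ∀ z ∈ Z, (orderOf z).Coprime p)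
    (hAR : A ≤ R ⊔ Z) : A ≤ R := by
  have : Z.Normal := ⟨fun z hz g => by simpa [(mem_center_iff.mp (hZ hz) g)] using hz⟩
  intro a ha
  obtain ⟨r, hr, z, hz, rfl⟩ := mem_sup_of_normal_right.mp (hAR ha)
  obtain ⟨i, hi⟩ := IsPGroup.iff_orderOf.mp hR ⟨r, hr⟩
  obtain ⟨j, hj⟩ := IsPGroup.iff_orderOf.mp hA ⟨r * z, ha⟩
  rw [orderOf_mk] at hi hj
  have hcomm : Commute r⁻¹ (r * z) := by
    rw [Commute, SemiconjBy, inv_mul_cancel_left, mem_center_iff.mp (hZ hz) r,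
      mul_inv_cancel_right]
  have hz_dvd : orderOf z ∣ p ^ (i + j) := by
    simpa [pow_add, hi, hj] using hcomm.orderOf_mul_dvd_mul_orderOf
  rw [orderOf_eq_one_iff.mp (((hZp z hz).pow_right _).eq_one_of_dvd hz_dvd), mul_one]
  exact hr

end Coprime

section Quotient

variable {G : Type*} [Group G] {p : ℕ}

theorem Subgroup.map_normalizer_of_surjective {G' : Type*} [Group G'] {f : G →* G'}
    (hf : Function.Surjective f) {K : Subgroup G} (hK : f.ker ≤ K) :
    (normalizer K).map f = normalizer (K.map f : Set G') := by
  rw [← map_comap_eq_self_of_surjective hf (normalizer _), comap_normalizer_eq_of_surjective _ hf,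
    comap_map_eq, sup_of_le_left hK]

variable [Finite G] [Fact p.Prime]

theorem Sylow.sup_ker_eq_top {G' : Type*} [Group G'] (S : Sylow p G) {f : G →* G'}
    (hf : IsPGroup p f.range) : ↑S ⊔ f.ker = ⊤ := by
  have hS : (S.mapSurjective f.rangeRestrict_surjective : Subgroup f.range) = ⊤ :=
    ((S.mapSurjective _).is_maximal' (hf.to_subgroup ⊤) le_top).symm
  rw [Sylow.coe_mapSurjective] at hS
  rw [← f.ker_rangeRestrict, ← comap_map_eq, hS, comap_top]

theorem exists_isPGroup_sup_eq {N K : Subgroup G} [N.Normal] (hNK : N ≤ K)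
    (hK : IsPGroup p (K.map (QuotientGroup.mk' N))) :
    ∃ S : Subgroup G, IsPGroup p S ∧ S ⊔ N = K := by
  obtain ⟨S⟩ : Nonempty (Sylow p K) := inferInstance
  have hf : IsPGroup p ((QuotientGroup.mk' N).comp K.subtype).range := by
    rwa [MonoidHom.range_comp, range_subtype]
  refine ⟨S.map K.subtype, S.isPGroup'.map _, ?_⟩
  have := congrArg (map K.subtype) (S.sup_ker_eq_top hf)
  rwa [Subgroup.map_sup, ← MonoidHom.comap_ker, QuotientGroup.ker_mk', ← subgroupOf,
    subgroupOf_map_subtype, inf_of_le_left hNK, ← MonoidHom.range_eq_map, range_subtype] at this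

end Quotient

structure IsCentralPComplement {G : Type*} [Group G] (p : ℕ) (N Z : Subgroup G) : Prop where
  le_center : Z ≤ center G
  coprime_orderOf : ∀ z ∈ Z, (orderOf z).Coprime p
  pCore_sup_eq : N.pCore p ⊔ Z = N

theorem isCentralPComplement_pPrimeCore {G : Type*} [Group G] [Finite G] {p : ℕ}
    [Fact p.Prime] (N : Subgroup G) [Group.IsNilpotent N]
    (hc : (pPrimeCore p N).map N.subtype ≤ center G) :
    IsCentralPComplement p N ((pPrimeCore p N).map N.subtype) where
  le_center := hc
  coprime_orderOf := by
    rintro _ ⟨y, hy, rfl⟩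
    rw [coe_subtype, orderOf_coe]
    refine coprime_orderOf_of_mem_pPrimeCore (fun a ha b _ => ?_) hy
    exact Subtype.ext (mem_center_iff.mp (hc ⟨a, ha, rfl⟩) b).symm
  pCore_sup_eq := by
    rw [pCore, ← Subgroup.map_sup, pCore'_sup_pPrimeCore, ← MonoidHom.range_eq_map,
      range_subtype]

namespace IsCentralPComplement

open QuotientGroup

variable {G : Type*} [Group G] {p : ℕ} [Fact p.Prime] {N Z R : Subgroup G}

theorem le_of_le_sup (h : IsCentralPComplement p N Z) {A : Subgroup G} (hA : IsPGroup p A)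
    (hR : IsPGroup p R) (hPR : N.pCore p ≤ R) (hAR : A ≤ R ⊔ N) : A ≤ R :=
  hA.le_of_le_sup_central hR h.le_center h.coprime_orderOf <| by
    rwa [← h.pCore_sup_eq, ← sup_assoc, sup_of_le_left hPR] at hAR

theorem le_of_map_le [N.Normal] (h : IsCentralPComplement p N Z) {A : Subgroup G}
    (hA : IsPGroup p A) (hR : IsPGroup p R) (hPR : N.pCore p ≤ R)
    (hAR : A.map (mk' N) ≤ R.map (mk' N)) : A ≤ R := by
  refine h.le_of_le_sup hA hR hPR ?_
  rw [← ker_mk' N, ← comap_map_eq]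
  exact map_le_iff_le_comap.mp hAR

variable [Finite G] [N.Normal]

theorem normalizer_sup_eq (h : IsCentralPComplement p N Z) (hR : IsPGroup p R)
    (hPR : N.pCore p ≤ R) :
    normalizer ((R ⊔ N : Subgroup G) : Set G) = normalizer (R : Set G) := by
  refine le_antisymm (fun g hg => mem_normalizer_of_map_conj_le ?_)
    normalizer_le_normalizer_sup_normal
  refine h.le_of_le_sup (hR.map _) hR hPR ?_
  rw [← (mem_normalizer_iff_map_conj_eq.mp hg), Subgroup.map_sup]
  exact le_sup_left

theorem le_normalizer (h : IsCentralPComplement p N Z) (hR : IsPGroup p R)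
    (hPR : N.pCore p ≤ R) : N ≤ normalizer R :=
  le_sup_right.trans (h.normalizer_sup_eq hR hPR ▸ Subgroup.le_normalizer)

theorem map_normalizer (h : IsCentralPComplement p N Z) (hR : IsPGroup p R)
    (hPR : N.pCore p ≤ R) :
    (normalizer R).map (mk' N) = normalizer (R.map (mk' N) : Set (G ⧸ N)) := by
  have hRN : R.map (mk' N) = (R ⊔ N).map (mk' N) := by
    rw [Subgroup.map_sup, map_mk'_self, sup_bot_eq]
  have hker : (mk' N).ker ≤ R ⊔ N := (ker_mk' N).trans_le le_sup_right
  rw [hRN, ← map_normalizer_of_surjective (mk'_surjective N) hker, h.normalizer_sup_eq hR hPR]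

theorem map_pCore (h : IsCentralPComplement p N Z) {H : Subgroup G} (hNH : N ≤ H) :
    (H.pCore p).map (mk' N) = (H.map (mk' N)).pCore p := by
  refine le_antisymm (le_pCore (map_mono pCore_le) (isPGroup_pCore.map _)
    ((map_mono le_normalizer_pCore).trans (le_normalizer_map _))) ?_
  set K := ((H.map (mk' N)).pCore p).comap (mk' N)
  have hmapK : K.map (mk' N) = (H.map (mk' N)).pCore p :=
    map_comap_eq_self_of_surjective (mk'_surjective N) _
  have hNK : N ≤ K := le_comap_mk' N _
  have hHK : H ≤ normalizer K := by
    rw [← comap_normalizer_eq_of_surjective _ (mk'_surjective N), ← map_le_iff_le_comap]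
    exact le_normalizer_pCore
  have hKH : K ≤ H := by
    have := comap_mono (f := mk' N) (pCore_le (p := p) (H := H.map (mk' N)))
    rwa [comap_map_eq, ker_mk', sup_of_le_left hNH] at this
  obtain ⟨S, hS, hSN⟩ := exists_isPGroup_sup_eq hNK (hmapK ▸ isPGroup_pCore)
  have := normal_pCore (p := p) (H := N)
  have hK : (S ⊔ N.pCore p) ⊔ Z = K := by rw [sup_assoc, h.pCore_sup_eq, hSN]
  have hSP : S ⊔ N.pCore p ≤ K.pCore p :=
    le_pCore (hK ▸ le_sup_left) (hS.to_sup_of_normal_right isPGroup_pCore)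
      (hK ▸ sup_le Subgroup.le_normalizer (h.le_center.trans (center_le_normalizer _)))
  have hKP : K.pCore p ≤ H.pCore p :=
    le_pCore (pCore_le.trans hKH) isPGroup_pCore (hHK.trans normalizer_le_normalizer_pCore)
  calc (H.map (mk' N)).pCore p = (S ⊔ N).map (mk' N) := by rw [hSN, hmapK]
    _ ≤ (H.pCore p ⊔ N).map (mk' N) :=
      map_mono (sup_le_sup_right (le_sup_left.trans (hSP.trans hKP)) _)
    _ = (H.pCore p).map (mk' N) := by rw [Subgroup.map_sup, map_mk'_self, sup_bot_eq]

theorem isRadicalPSubgroup_map (h : IsCentralPComplement p N Z) (hR : IsRadicalPSubgroup p R) :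
    IsRadicalPSubgroup p (R.map (mk' N)) := by
  have hPR := hR.pCore_le N
  have hRp := hR.isPGroup
  rw [isRadicalPSubgroup_iff] at hR ⊢
  rw [← h.map_normalizer hRp hPR, ← h.map_pCore (h.le_normalizer hRp hPR), hR]

theorem eq_of_map_eq (h : IsCentralPComplement p N Z) {R' : Subgroup G}
    (hR : IsRadicalPSubgroup p R) (hR' : IsRadicalPSubgroup p R')
    (heq : R.map (mk' N) = R'.map (mk' N)) : R = R' :=
  le_antisymm
    (h.le_of_map_le hR.isPGroup hR'.isPGroup (hR'.pCore_le N) heq.le)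
    (h.le_of_map_le hR'.isPGroup hR.isPGroup (hR.pCore_le N) heq.ge)

theorem exists_isRadicalPSubgroup_map_eq (h : IsCentralPComplement p N Z) {S : Subgroup (G ⧸ N)}
    (hS : IsRadicalPSubgroup p S) : ∃ R, IsRadicalPSubgroup p R ∧ R.map (mk' N) = S := by
  set K := S.comap (mk' N)
  have hNK : N ≤ K := le_comap_mk' N _
  have := normal_pCore (p := p) (H := N)
  have hPR : N.pCore p ≤ K.pCore p :=
    le_pCore (pCore_le.trans hNK) isPGroup_pCore le_normalizer_of_normal
  have hRS : (K.pCore p).map (mk' N) = S := by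
    rw [h.map_pCore hNK, map_comap_eq_self_of_surjective (mk'_surjective N),
      pCore_eq_self hS.isPGroup]
  refine ⟨K.pCore p, isRadicalPSubgroup_iff.mpr (le_antisymm ?_ ?_), hRS⟩
  · refine h.le_of_map_le isPGroup_pCore isPGroup_pCore hPR (le_of_eq ?_)
    rw [h.map_pCore (h.le_normalizer isPGroup_pCore hPR), h.map_normalizer isPGroup_pCore hPR, hRS,
      isRadicalPSubgroup_iff.mp hS]
  · exact le_pCore Subgroup.le_normalizer isPGroup_pCore le_rfl

end IsCentralPComplement

/-- If `N` is a nilpotent normal subgroup of a finite group `G` with `O_{p'}(N) ≤ Z(G)`,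
then `R ↦ RN/N` is a bijection from the radical `p`-subgroups of `G` onto the radical
`p`-subgroups of `G/N`. -/
theorem statement_1 {G : Type*} [Group G] [Finite G] {p : ℕ} (hp : p.Prime)
    (N : Subgroup G) [N.Normal] (hnil : Group.IsNilpotent N)
    (hc : (pPrimeCore p N).map N.subtype ≤ Subgroup.center G) :
    Set.BijOn (fun R : Subgroup G => R.map (QuotientGroup.mk' N))
      {R : Subgroup G | IsRadicalPSubgroup p R}
      {S : Subgroup (G ⧸ N) | IsRadicalPSubgroup p S} := by
  have := Fact.mk hp
  have h := isCentralPComplement_pPrimeCore N hc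
  exact ⟨fun _ hR => h.isRadicalPSubgroup_map hR, fun _ hR _ hR' heq => h.eq_of_map_eq hR hR' heq,
    fun _ hS => h.exists_isRadicalPSubgroup_map_eq hS⟩
end

section
/- Let p be a prime, G a finite group and R a p-subgroup of G such that the center Z(R) is a Sylow p-subgroup of the centralizer Z_G(R). If O_p(N_G(R)/(R·Z_G(R))) = 1 (note that R·Z_G(R) is a normal subgroup of N_G(R)), then R is a radical p-subgroup of G. -/
open Subgroup
open scoped Pointwise

namespace Subgroup

variable {G : Type*} [Group G]

theorem normalizer_le_normalizer_centralizer (s : Set G) :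
    normalizer s ≤ normalizer (centralizer s : Set G) :=
  le_normalizer_of_normal_subgroupOf (centralizer_le_normalizer s)

theorem Normal.le_normalizer_map_subtype {N : Subgroup G} {H : Subgroup N} (hH : H.Normal) :
    N ≤ normalizer (H.map N.subtype : Set G) := by
  simpa [normalizer_eq_top H, ← MonoidHom.range_eq_map] using le_normalizer_map (H := H) N.subtype

theorem le_normalizer_sup {K A B : Subgroup G} (hA : K ≤ normalizer (A : Set G))
    (hB : K ≤ normalizer (B : Set G)) : K ≤ normalizer ((A ⊔ B : Subgroup G) : Set G) :=
  (le_inf hA hB).trans (normalizer_inf_normalizer_le_normalizer_sup A B)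

theorem exists_mul_pow_eq_pow_mul {L : Subgroup G} {q l : G} (hq : q ∈ normalizer (L : Set G))
    (hl : l ∈ L) (k : ℕ) : ∃ l' ∈ L, (q * l) ^ k = q ^ k * l' := by
  induction k with
  | zero => exact ⟨1, L.one_mem, by simp⟩
  | succ k ih =>
    obtain ⟨l', hl', hk⟩ := ih
    refine ⟨q⁻¹ * l' * q * l, L.mul_mem ((mem_normalizer_iff''.1 hq l').1 hl') hl, ?_⟩
    rw [pow_succ, hk, pow_succ]
    group

theorem le_of_le_sup_of_sup_inf_le {A B C : Subgroup G} (hC : C ≤ normalizer (B : Set G))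
    (hA : A ≤ B ⊔ C) (hABC : (B ⊔ A) ⊓ C ≤ B) : A ≤ B := by
  intro x hx
  have hx' : x ∈ (B : Set G) * C := by
    rw [← coe_mul_of_right_le_normalizer_left B C hC]
    exact hA hx
  obtain ⟨b, hb, c, hc, rfl⟩ := hx'
  have hcBA : c ∈ B ⊔ A := by
    simpa using mul_mem (mem_sup_left (inv_mem hb)) (mem_sup_right hx)
  exact mul_mem hb (hABC ⟨hcBA, hc⟩)

end Subgroup

namespace IsPGroup

variable {G : Type*} [Group G] {p : ℕ}

theorem exists_pow_mem_of_mem_sup {Q L : Subgroup G} (hQ : IsPGroup p Q)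
    (hQL : Q ≤ normalizer (L : Set G)) {s : G} (hs : s ∈ Q ⊔ L) :
    ∃ n : ℕ, s ^ p ^ n ∈ L := by
  rw [← SetLike.mem_coe, coe_mul_of_left_le_normalizer_right Q L hQL] at hs
  obtain ⟨q, hq, l, hl, rfl⟩ := hs
  obtain ⟨n, hn⟩ := hQ ⟨q, hq⟩
  obtain ⟨l', hl', h⟩ := exists_mul_pow_eq_pow_mul (hQL hq) hl (p ^ n)
  refine ⟨n, ?_⟩
  rwa [h, show q ^ p ^ n = 1 from congrArg Subtype.val hn, one_mul]

theorem inf_le_of_sylow_eq_subgroupOf {H K T : Subgroup G} (hT : IsPGroup p T)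
    (hKT : K ≤ normalizer (T : Set G)) (P : Sylow p K)
    (hP : (P : Subgroup K) = H.subgroupOf K) : T ⊓ K ≤ H := by
  have : (T.comap K.subtype).Normal :=
    ⟨fun t ht k => (mem_normalizer_iff.1 (hKT k.2) t).1 ht⟩
  rintro x ⟨hxT, hxK⟩
  exact (hP ▸ hT.comap_subtype.le_sylow_of_normal P hxT : (⟨x, hxK⟩ : K) ∈ H.subgroupOf K)

theorem le_sup_centralizer {R Q : Subgroup G}
    (hOp : ∀ S : Subgroup G, S ≤ normalizer (R : Set G) →
      R ⊔ centralizer (R : Set G) ≤ S →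
      (∀ g ∈ normalizer (R : Set G), ∀ s ∈ S, g * s * g⁻¹ ∈ S) →
      (∀ s ∈ S, ∃ n : ℕ, s ^ p ^ n ∈ R ⊔ centralizer (R : Set G)) →
      S = R ⊔ centralizer (R : Set G))
    (hQ : IsPGroup p Q) (hQN : Q ≤ normalizer (R : Set G))
    (hNQ : normalizer (R : Set G) ≤ normalizer (Q : Set G)) :
    Q ≤ R ⊔ centralizer (R : Set G) := by
  set C := centralizer (R : Set G)
  have hNRC : normalizer (R : Set G) ≤ normalizer ((R ⊔ C : Subgroup G) : Set G) :=
    le_normalizer_sup le_rfl (normalizer_le_normalizer_centralizer _)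
  have hNS := le_normalizer_sup hNQ hNRC
  have hS := hOp _ (sup_le hQN (sup_le le_normalizer (centralizer_le_normalizer _)))
    le_sup_right (fun g hg s hs => (mem_normalizer_iff.1 (hNS hg) s).1 hs)
    (fun s hs => hQ.exists_pow_mem_of_mem_sup (hQN.trans hNRC) hs)
  exact le_sup_left.trans hS.le

end IsPGroup

theorem statement_5_general {G : Type*} [Group G] {p : ℕ}
    (R : Subgroup G) (hR : IsPGroup p R)
    (hsyl : ∃ P : Sylow p (Subgroup.centralizer (R : Set G)),
      (P : Subgroup (Subgroup.centralizer (R : Set G))) =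
        (R ⊓ Subgroup.centralizer (R : Set G)).subgroupOf (Subgroup.centralizer (R : Set G)))
    (hOp : ∀ S : Subgroup G, S ≤ Subgroup.normalizer (R : Set G) →
      R ⊔ Subgroup.centralizer (R : Set G) ≤ S →
      (∀ g ∈ Subgroup.normalizer (R : Set G), ∀ s ∈ S, g * s * g⁻¹ ∈ S) →
      (∀ s ∈ S, ∃ n : ℕ, s ^ p ^ n ∈ R ⊔ Subgroup.centralizer (R : Set G)) →
      S = R ⊔ Subgroup.centralizer (R : Set G)) :
    IsRadicalPSubgroup p R := by
  set N := normalizer (R : Set G)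
  set C := centralizer (R : Set G)
  obtain ⟨P, hP⟩ := hsyl
  refine le_antisymm (le_sSup ⟨normal_in_normalizer, hR.comap_subtype⟩) (sSup_le ?_)
  rintro H ⟨hHn, hHp⟩
  set Q := H.map N.subtype
  have hQN : Q ≤ N := map_subtype_le H
  have hNQ : N ≤ normalizer (Q : Set G) := hHn.le_normalizer_map_subtype
  have hQp : IsPGroup p Q := hHp.map N.subtype
  have hQRC : Q ≤ R ⊔ C := hQp.le_sup_centralizer hOp hQN hNQ
  have hRQ : IsPGroup p (R ⊔ Q : Subgroup G) :=
    hR.to_sup_of_normal_right' hQp (le_normalizer.trans hNQ)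
  have hCRQ : C ≤ normalizer ((R ⊔ Q : Subgroup G) : Set G) :=
    (centralizer_le_normalizer _).trans (le_normalizer_sup le_rfl hNQ)
  have hRQC : (R ⊔ Q) ⊓ C ≤ R :=
    (hRQ.inf_le_of_sylow_eq_subgroupOf hCRQ P hP).trans inf_le_left
  exact map_le_iff_le_comap.1
    (le_of_le_sup_of_sup_inf_le (centralizer_le_normalizer _) hQRC hRQC)

/-- Let `R` be a `p`-subgroup of a finite group `G` such that `Z(R)` is a Sylow `p`-subgroup of
`Z_G(R)`.  If `O_p(N_G(R)/(R·Z_G(R))) = 1` — expressed as: every subgroup `S` of `N_G(R)`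
containing `R·Z_G(R) = R ⊔ Z_G(R)`, normalized by `N_G(R)`, and with `S/(R·Z_G(R))` a `p`-group
equals `R·Z_G(R)` — then `R` is a radical `p`-subgroup of `G`. -/
theorem statement_5 {G : Type*} [Group G] [Finite G] {p : ℕ} (hp : p.Prime)
    (R : Subgroup G) (hR : IsPGroup p R)
    (hsyl : ∃ P : Sylow p (Subgroup.centralizer (R : Set G)),
      (P : Subgroup (Subgroup.centralizer (R : Set G))) =
        (R ⊓ Subgroup.centralizer (R : Set G)).subgroupOf (Subgroup.centralizer (R : Set G)))
    (hOp : ∀ S : Subgroup G, S ≤ Subgroup.normalizer (R : Set G) →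
      R ⊔ Subgroup.centralizer (R : Set G) ≤ S →
      (∀ g ∈ Subgroup.normalizer (R : Set G), ∀ s ∈ S, g * s * g⁻¹ ∈ S) →
      (∀ s ∈ S, ∃ n : ℕ, s ^ p ^ n ∈ R ⊔ Subgroup.centralizer (R : Set G)) →
      S = R ⊔ Subgroup.centralizer (R : Set G)) :
    IsRadicalPSubgroup p R :=
  statement_5_general R hR hsyl hOp
end

section
/- Let q' be a prime power, let F be a finite field with (q')² elements, let ε ∈ {1, −1} ⊆ F, and let λ ∈ F satisfy λ^{q'} = λ (i.e., λ lies in the subfield with q' elements). Then there exist elements b, b' ∈ F such that b² + b'² = λ, b^{q'} = εb and (b')^{q'} = εb'. -/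
/-!
The Frobenius `x ↦ x ^ q'` is an involution of `F` whose fixed points form a subfield `K`, and
every element of a finite field is a sum of two squares. For `ε = 1` write `λ = a² + c²` in `K`.
For `ε = -1`, some `y` is not fixed since `X ^ q' - X` has at most `q' < q'²` roots; then
`u = y - y ^ q'` is nonzero with `u ^ q' = -u`, so `u² ∈ K`, and `λ / u² = a² + c²` in `K` gives
`b = u a`, `b' = u c`.
-/

open Polynomial

namespace FiniteField

theorem exists_sq_add_sq (K : Type*) [Field K] [Finite K] (x : K) :
    ∃ a b : K, a ^ 2 + b ^ 2 = x := by
  have := Fintype.ofFinite K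
  by_cases hK : ringChar K = 2
  · obtain ⟨r, rfl⟩ := isSquare_of_char_two hK x
    exact ⟨r, 0, by ring⟩
  · obtain ⟨a, b, hab⟩ : ∃ a b, (X ^ 2 : K[X]).eval a + (X ^ 2 - C x).eval b = 0 :=
      exists_root_sum_quadratic (degree_X_pow 2) (degree_X_pow_sub_C two_pos _)
        (odd_card_of_char_ne_two hK)
    refine ⟨a, b, ?_⟩
    simp only [eval_pow, eval_X, eval_sub, eval_C] at hab
    linear_combination hab

theorem exists_pow_ne_self {F : Type*} [Field F] [Fintype F] {n : ℕ} (hn : 1 < n)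
    (hcard : n < Fintype.card F) : ∃ y : F, y ^ n ≠ y := by
  by_contra! h
  have hroots : (Finset.univ : Finset F).val ⊆ (X ^ n - X : F[X]).roots := fun y _ => by
    simp [mem_roots (X_pow_card_sub_X_ne_zero F hn), h y]
  have := card_le_degree_of_subset_roots hroots
  rw [Finset.card_univ, X_pow_card_sub_X_natDegree_eq F hn] at this
  omega

section Frobenius

variable {F : Type*} [Field F] [Fintype F] {p : ℕ} [Fact p.Prime] [CharP F p] {k : ℕ}

theorem exists_sq_add_sq_of_pow_eq_self {x : F} (hx : x ^ p ^ k = x) :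
    ∃ a b : F, a ^ 2 + b ^ 2 = x ∧ a ^ p ^ k = a ∧ b ^ p ^ k = b := by
  let K := (iterateFrobenius F p k).eqLocusField (RingHom.id F)
  obtain ⟨a, b, hab⟩ := exists_sq_add_sq K ⟨x, hx⟩
  exact ⟨a, b, congrArg Subtype.val hab, a.2, b.2⟩

theorem exists_ne_zero_pow_eq_neg (hF : Fintype.card F = (p ^ k) ^ 2) :
    ∃ u : F, u ≠ 0 ∧ u ^ p ^ k = -u := by
  have hq : 1 < p ^ k := by
    have := Fintype.one_lt_card (α := F)
    by_contra! hle
    have : (p ^ k) ^ 2 ≤ 1 := pow_le_one' hle 2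
    omega
  obtain ⟨y, hy⟩ := exists_pow_ne_self hq (by rw [hF]; nlinarith)
  have hyy : (y ^ p ^ k) ^ p ^ k = y := by rw [← pow_mul, ← sq, ← hF, pow_card]
  refine ⟨y - y ^ p ^ k, sub_ne_zero.mpr (Ne.symm hy), ?_⟩
  rw [sub_pow_char_pow, hyy, neg_sub]

theorem exists_sq_add_sq_of_pow_eq_mul {ε u lam : F} (hε : ε ^ 2 = 1) (hu0 : u ≠ 0)
    (hu : u ^ p ^ k = ε * u) (hlam : lam ^ p ^ k = lam) :
    ∃ b b' : F, b ^ 2 + b' ^ 2 = lam ∧ b ^ p ^ k = ε * b ∧ b' ^ p ^ k = ε * b' := by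
  have hu2 : (u ^ 2) ^ p ^ k = u ^ 2 := by
    rw [← pow_mul, mul_comm, pow_mul, hu, mul_pow, hε, one_mul]
  obtain ⟨a, c, hac, ha, hc⟩ :=
    exists_sq_add_sq_of_pow_eq_self (k := k) (x := lam / u ^ 2) (by rw [div_pow, hlam, hu2])
  refine ⟨u * a, u * c, ?_, by rw [mul_pow, hu, ha, mul_assoc], by rw [mul_pow, hu, hc, mul_assoc]⟩
  rw [eq_div_iff (pow_ne_zero 2 hu0)] at hac
  linear_combination hac

end Frobenius

end FiniteField

open FiniteField in
/-- Let `q'` be a prime power, `F` a finite field with `q'²` elements, `ε ∈ {1, -1} ⊆ F`, and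
`λ ∈ F` with `λ^{q'} = λ`.  Then there exist `b, b' ∈ F` with `b² + b'² = λ`, `b^{q'} = ε·b`
and `b'^{q'} = ε·b'`. -/
theorem statement_10 (q' : ℕ) (hq' : IsPrimePow q')
    (F : Type*) [Field F] [Fintype F] (hF : Fintype.card F = q' ^ 2)
    (ε : F) (hε : ε = 1 ∨ ε = -1)
    (lam : F) (hlam : lam ^ q' = lam) :
    ∃ b b' : F, b ^ 2 + b' ^ 2 = lam ∧ b ^ q' = ε * b ∧ b' ^ q' = ε * b' := by
  obtain ⟨p, k, hp, -, rfl⟩ := hq'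
  have := Fact.mk hp.nat_prime
  have : CharP F p := charP_of_card_eq_prime_pow (f := k * 2) (by rw [hF, pow_mul])
  obtain ⟨u, hu0, hu⟩ : ∃ u : F, u ≠ 0 ∧ u ^ p ^ k = ε * u := by
    rcases hε with rfl | rfl
    · exact ⟨1, one_ne_zero, by simp⟩
    · simpa using exists_ne_zero_pow_eq_neg hF
  exact exists_sq_add_sq_of_pow_eq_mul (by rcases hε with rfl | rfl <;> ring) hu0 hu hlam
end

section
/- Let q be an odd prime power, let m ≥ 1 be an integer and set n = 2m, and let δ ∈ F_q^×. Suppose X, Y ∈ GL_n(F_q) satisfy XYX⁻¹Y⁻¹ = −I_n, X² = I_n and Y² = δ·I_n. Then there exists g ∈ GL_n(F_q) such that gXg⁻¹ is the block matrix with diagonal blocks −I_m and I_m (and zero off-diagonal blocks), and gYg⁻¹ is the block matrix with off-diagonal blocks I_m (top right) and δ·I_m (bottom left) and zero diagonal blocks. -/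
/-! Since `q` is odd, the involution `X` splits the space as `ker (X + 1) ⊕ ker (X - 1)`.
Anticommutation makes `Y` swap the two eigenspaces, and `Y² = δ` with `δ ≠ 0` makes it an
isomorphism between them, so each has dimension `m`. A basis `f` of `ker (X - 1)` together with
the basis `Y f` of `ker (X + 1)` puts `X` and `Y` in the required block form. -/

open Module

theorem FiniteField.two_ne_zero_of_odd_card {F : Type*} [Field F] [Fintype F]
    (hF : Odd (Fintype.card F)) : (2 : F) ≠ 0 :=
  Ring.two_ne_zero fun h => by
    have := FiniteField.even_card_iff_char_two.mp h
    rw [Nat.odd_iff] at hF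
    omega

theorem Units.val_mul_eq_neg_of_commutator_eq_neg_one {R : Type*} [Ring R] {u v : Rˣ}
    (h : ((u * v * u⁻¹ * v⁻¹ : Rˣ) : R) = -1) : (u : R) * v = -(v * u) :=
  calc (u : R) * v = ((u * v * u⁻¹ * v⁻¹ : Rˣ) : R) * v * u := by simp [mul_assoc]
    _ = -(v * u) := by rw [h, neg_one_mul, neg_mul]

theorem Module.Basis.exists_units_conj_eq_toMatrix {R ι : Type*} [CommRing R] [Fintype ι]
    [DecidableEq ι] (b : Basis ι R (ι → R)) :
    ∃ g : (Matrix ι ι R)ˣ, ∀ A : Matrix ι ι R,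
      (g : Matrix ι ι R) * A * (↑g⁻¹ : Matrix ι ι R) =
        LinearMap.toMatrix b b (Matrix.toLin' A) := by
  let s := Pi.basisFun R ι
  refine ⟨⟨b.toMatrix s, s.toMatrix b, b.toMatrix_mul_toMatrix_flip s,
    s.toMatrix_mul_toMatrix_flip b⟩, fun A => ?_⟩
  rw [← basis_toMatrix_mul_linearMap_toMatrix_mul_basis_toMatrix (b' := s) (c' := s),
    LinearMap.toMatrix_eq_toMatrix', LinearMap.toMatrix'_toLin']
  rfl

namespace Module.End

variable {K V : Type*} [Field K] [AddCommGroup V] [Module K V] {x y : Module.End K V}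

theorem isCompl_ker_add_one_ker_sub_one (h2 : (2 : K) ≠ 0) (hx : x * x = 1) :
    IsCompl (LinearMap.ker (x + 1)) (LinearMap.ker (x - 1)) := by
  have hxx (v : V) : x (x v) = v := congr($hx v)
  constructor
  · rw [Submodule.disjoint_def]
    intro v hP hQ
    simp only [LinearMap.mem_ker, LinearMap.add_apply, LinearMap.sub_apply, one_apply] at hP hQ
    have : (2 : K) • v = 0 :=
      calc (2 : K) • v = (x v + v) - (x v - v) := by rw [two_smul]; abel
        _ = 0 := by rw [hP, hQ, sub_zero]
    exact (smul_eq_zero.mp this).resolve_left h2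
  · rw [codisjoint_iff_le_sup]
    intro v _
    have hP : (2 : K)⁻¹ • (v - x v) ∈ LinearMap.ker (x + 1) := by
      simp [hxx]
    have hQ : (2 : K)⁻¹ • (v + x v) ∈ LinearMap.ker (x - 1) := by
      simp [hxx, add_comm]
    convert Submodule.add_mem_sup hP hQ
    rw [← smul_add, sub_add_add_cancel, ← two_smul K, smul_smul, inv_mul_cancel₀ h2, one_smul]

theorem mem_ker_add_one_of_anticomm (hxy : x * y = -(y * x)) {v : V}
    (hv : v ∈ LinearMap.ker (x - 1)) : y v ∈ LinearMap.ker (x + 1) := by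
  have hv : x v = v := sub_eq_zero.mp hv
  have : x (y v) = -y (x v) := congr($hxy v)
  simp [this, hv]

theorem mem_ker_sub_one_of_anticomm (hxy : x * y = -(y * x)) {v : V}
    (hv : v ∈ LinearMap.ker (x + 1)) : y v ∈ LinearMap.ker (x - 1) := by
  have hv : x v = -v := eq_neg_of_add_eq_zero_left hv
  have : x (y v) = -y (x v) := congr($hxy v)
  simp [this, hv]

noncomputable def kerSubOneEquivKerAddOne (hxy : x * y = -(y * x)) {δ : K} (hδ : δ ≠ 0)
    (hy : y * y = δ • 1) : LinearMap.ker (x - 1) ≃ₗ[K] LinearMap.ker (x + 1) :=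
  LinearEquiv.ofLinearMap (y.restrict fun _ => mem_ker_add_one_of_anticomm hxy)
    ((δ⁻¹ • y).restrict fun _ hv =>
      Submodule.smul_mem _ _ (mem_ker_sub_one_of_anticomm hxy hv))
    (by ext v; simp [← mul_apply, hy, smul_smul, hδ])
    (by ext v; simp [← mul_apply, hy, smul_smul, hδ])

@[simp]
theorem kerSubOneEquivKerAddOne_apply (hxy : x * y = -(y * x)) {δ : K} (hδ : δ ≠ 0)
    (hy : y * y = δ • 1) (v : LinearMap.ker (x - 1)) :
    (kerSubOneEquivKerAddOne hxy hδ hy v : V) = y v := rfl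

variable [FiniteDimensional K V]

theorem finrank_ker_sub_one_of_anticomm (h2 : (2 : K) ≠ 0) (hx : x * x = 1)
    (hxy : x * y = -(y * x)) {δ : K} (hδ : δ ≠ 0) (hy : y * y = δ • 1) {m : ℕ}
    (hV : finrank K V = m + m) : finrank K (LinearMap.ker (x - 1)) = m := by
  have hsum := Submodule.finrank_add_eq_of_isCompl (isCompl_ker_add_one_ker_sub_one h2 hx)
  have heq := (kerSubOneEquivKerAddOne hxy hδ hy).finrank_eq
  omega

theorem exists_basis_toMatrix_eq_fromBlocks (h2 : (2 : K) ≠ 0) (hx : x * x = 1)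
    (hxy : x * y = -(y * x)) {δ : K} (hδ : δ ≠ 0) (hy : y * y = δ • 1) {m : ℕ}
    (hV : finrank K V = m + m) :
    ∃ b : Basis (Fin m ⊕ Fin m) K V,
      LinearMap.toMatrix b b x = Matrix.fromBlocks (-1) 0 0 1 ∧
      LinearMap.toMatrix b b y = Matrix.fromBlocks 0 1 (δ • 1) 0 := by
  classical
  let f : Basis (Fin m) K (LinearMap.ker (x - 1)) :=
    finBasisOfFinrankEq K _ (finrank_ker_sub_one_of_anticomm h2 hx hxy hδ hy hV)
  let e := kerSubOneEquivKerAddOne hxy hδ hy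
  let b : Basis (Fin m ⊕ Fin m) K V :=
    ((f.map e).prod f).map
      (Submodule.prodEquivOfIsCompl _ _ (isCompl_ker_add_one_ker_sub_one h2 hx))
  have hb_inl (i : Fin m) : b (Sum.inl i) = e (f i) := by simp [b, e]
  have hb_inr (i : Fin m) : b (Sum.inr i) = f i := by simp [b]
  have hx_inl (i : Fin m) : x (b (Sum.inl i)) = -b (Sum.inl i) := by
    rw [hb_inl]; exact eq_neg_of_add_eq_zero_left (e (f i)).2
  have hx_inr (i : Fin m) : x (b (Sum.inr i)) = b (Sum.inr i) := by
    rw [hb_inr]; exact sub_eq_zero.mp (f i).2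
  have hy_inl (i : Fin m) : y (b (Sum.inl i)) = δ • b (Sum.inr i) := by
    rw [hb_inl, hb_inr, kerSubOneEquivKerAddOne_apply, ← mul_apply, hy]; rfl
  have hy_inr (i : Fin m) : y (b (Sum.inr i)) = b (Sum.inl i) := by
    rw [hb_inl, hb_inr, kerSubOneEquivKerAddOne_apply]
  refine ⟨b, ?_, ?_⟩
  · rw [← (LinearMap.toMatrix b b).eq_symm_apply, LinearMap.toMatrix_symm]
    refine b.ext fun j => ?_
    rcases j with i | i <;>
      simp [Matrix.toLin_self, Fintype.sum_sum_type, Matrix.one_apply, hx_inl, hx_inr]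
  · rw [← (LinearMap.toMatrix b b).eq_symm_apply, LinearMap.toMatrix_symm]
    refine b.ext fun j => ?_
    rcases j with i | i <;>
      simp [Matrix.toLin_self, Fintype.sum_sum_type, Matrix.one_apply, hy_inl, hy_inr]

end Module.End

theorem statement_11_general (q : ℕ) (hq : Odd q)
    (F : Type*) [Field F] [Fintype F] (hcard : Fintype.card F = q)
    (m : ℕ) (δ : Fˣ)
    (X Y : (Matrix (Fin m ⊕ Fin m) (Fin m ⊕ Fin m) F)ˣ)
    (hcomm : ((X * Y * X⁻¹ * Y⁻¹ : _ˣ) : Matrix (Fin m ⊕ Fin m) (Fin m ⊕ Fin m) F) = -1)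
    (hX2 : ((X : Matrix (Fin m ⊕ Fin m) (Fin m ⊕ Fin m) F)) ^ 2 = 1)
    (hY2 : ((Y : Matrix (Fin m ⊕ Fin m) (Fin m ⊕ Fin m) F)) ^ 2 = (δ : F) • 1) :
    ∃ g : (Matrix (Fin m ⊕ Fin m) (Fin m ⊕ Fin m) F)ˣ,
      ((g * X * g⁻¹ : _ˣ) : Matrix (Fin m ⊕ Fin m) (Fin m ⊕ Fin m) F) =
        Matrix.fromBlocks (-1 : Matrix (Fin m) (Fin m) F) 0 0 1 ∧
      ((g * Y * g⁻¹ : _ˣ) : Matrix (Fin m ⊕ Fin m) (Fin m ⊕ Fin m) F) =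
        Matrix.fromBlocks 0 (1 : Matrix (Fin m) (Fin m) F) ((δ : F) • 1) 0 := by
  classical
  let x := Matrix.toLinAlgEquiv' (X : Matrix (Fin m ⊕ Fin m) (Fin m ⊕ Fin m) F)
  let y := Matrix.toLinAlgEquiv' (Y : Matrix (Fin m ⊕ Fin m) (Fin m ⊕ Fin m) F)
  have hx : x * x = 1 := by rw [← map_mul, ← sq, hX2, map_one]
  have hy : y * y = (δ : F) • 1 := by rw [← map_mul, ← sq, hY2, map_smul, map_one]
  have hxy : x * y = -(y * x) := by
    rw [← map_mul, ← map_mul, Units.val_mul_eq_neg_of_commutator_eq_neg_one hcomm, map_neg]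
  obtain ⟨b, hbx, hby⟩ := Module.End.exists_basis_toMatrix_eq_fromBlocks
    (FiniteField.two_ne_zero_of_odd_card (hcard ▸ hq)) hx hxy δ.ne_zero hy (m := m) (by simp)
  obtain ⟨g, hg⟩ := b.exists_units_conj_eq_toMatrix
  refine ⟨g, ?_, ?_⟩ <;> rw [Units.val_mul, Units.val_mul, hg]
  exacts [hbx, hby]

/-- Let `q` be an odd prime power, `F = F_q`, `m ≥ 1`, `n = 2m`, and `δ ∈ F_q^×`.  If
`X, Y ∈ GL_n(F_q)` satisfy `XYX⁻¹Y⁻¹ = -I`, `X² = I` and `Y² = δ·I`, then the pair `(X, Y)` is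
conjugate to the pair `(diag(-I_m, I_m), antidiag(I_m, δ·I_m))`. -/
theorem statement_11 (q : ℕ) (hq : Odd q) (hpp : IsPrimePow q)
    (F : Type*) [Field F] [Fintype F] (hcard : Fintype.card F = q)
    (m : ℕ) (hm : 1 ≤ m) (δ : Fˣ)
    (X Y : (Matrix (Fin m ⊕ Fin m) (Fin m ⊕ Fin m) F)ˣ)
    (hcomm : ((X * Y * X⁻¹ * Y⁻¹ : _ˣ) : Matrix (Fin m ⊕ Fin m) (Fin m ⊕ Fin m) F) = -1)
    (hX2 : ((X : Matrix (Fin m ⊕ Fin m) (Fin m ⊕ Fin m) F)) ^ 2 = 1)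
    (hY2 : ((Y : Matrix (Fin m ⊕ Fin m) (Fin m ⊕ Fin m) F)) ^ 2 = (δ : F) • 1) :
    ∃ g : (Matrix (Fin m ⊕ Fin m) (Fin m ⊕ Fin m) F)ˣ,
      ((g * X * g⁻¹ : _ˣ) : Matrix (Fin m ⊕ Fin m) (Fin m ⊕ Fin m) F) =
        Matrix.fromBlocks (-1 : Matrix (Fin m) (Fin m) F) 0 0 1 ∧
      ((g * Y * g⁻¹ : _ˣ) : Matrix (Fin m ⊕ Fin m) (Fin m ⊕ Fin m) F) =
        Matrix.fromBlocks 0 (1 : Matrix (Fin m) (Fin m) F) ((δ : F) • 1) 0 :=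
  statement_11_general q hq F hcard m δ X Y hcomm hX2 hY2
end

section
/- Let q be an odd prime power and let V be a finite-dimensional vector space over F_q equipped with a nondegenerate symmetric bilinear form f. If there exists an isometry X of (V, f) with X ∘ X = −id_V, then dim V is even and the discriminant of f is trivial; that is, for any basis of V, the determinant of the Gram matrix of f is a square in F_q^×. -/
/-!
Let `G` be the Gram matrix of `B` and `M` the matrix of `X` in some basis. From `M² = -1` and
`Mᵀ G M = G` we get `Mᵀ G = -G M`, so `G M` is an invertible skew-symmetric matrix. Its size is
therefore even, and its determinant is a square: splitting off a `2 × 2` block around a nonzero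
entry leaves a skew-symmetric Schur complement, and the block contributes a square factor.
Finally `det M = 1`, so `det G = det (G M)`.
-/

namespace Matrix

variable {F : Type*} [Field F]

theorem diag_eq_zero_of_transpose_eq_neg {n : Type*} (h2 : (2 : F) ≠ 0)
    {A : Matrix n n F} (hA : Aᵀ = -A) (i : n) : A i i = 0 := by
  have h : A i i = -A i i := congrFun (congrFun hA i) i
  exact (mul_eq_zero.mp (by linear_combination h : (2 : F) * A i i = 0)).resolve_left h2

theorem even_card_of_transpose_eq_neg {n : Type*} [Fintype n] [DecidableEq n]
    (h2 : (2 : F) ≠ 0) {A : Matrix n n F} (hA : Aᵀ = -A) (hdet : A.det ≠ 0) :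
    Even (Fintype.card n) := by
  have h : A.det = (-1) ^ Fintype.card n * A.det := by
    rw [← det_neg, ← hA, det_transpose]
  refine (neg_one_pow_eq_one_iff_even fun h1 => h2 ?_).mp
    (mul_right_cancel₀ hdet (by rw [one_mul, ← h]))
  linear_combination -h1

theorem exists_transpose_eq_neg_det_eq_sq_mul {n : Type*} [Fintype n] [DecidableEq n]
    (h2 : (2 : F) ≠ 0) {C : Matrix (Fin 2 ⊕ n) (Fin 2 ⊕ n) F} (hC : Cᵀ = -C)
    (ha : C (.inl 0) (.inl 1) ≠ 0) :
    ∃ S : Matrix n n F, Sᵀ = -S ∧ C.det = C (.inl 0) (.inl 1) ^ 2 * S.det := by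
  set a := C (.inl 0) (.inl 1)
  have hP : C.toBlocks₁₁ = !![0, a; -a, 0] := by
    have h10 : C (.inl 1) (.inl 0) = -a := congrFun (congrFun hC (.inl 0)) (.inl 1)
    ext i k
    fin_cases i <;> fin_cases k <;>
      simp [toBlocks₁₁, diag_eq_zero_of_transpose_eq_neg h2 hC, a, h10]
  let Q : Matrix (Fin 2) (Fin 2) F := !![0, -a⁻¹; a⁻¹, 0]
  let _ : Invertible C.toBlocks₁₁ :=
    ⟨Q, by simp [hP, Q, one_fin_two, ha], by simp [hP, Q, one_fin_two, ha]⟩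
  have hblocks := hC
  rw [← fromBlocks_toBlocks C, fromBlocks_transpose, fromBlocks_neg] at hblocks
  obtain ⟨-, h₂₁, h₁₂, h₂₂⟩ := fromBlocks_inj.mp hblocks
  refine ⟨C.toBlocks₂₂ - C.toBlocks₂₁ * Q * C.toBlocks₁₂, ?_, ?_⟩
  · have hQ : Qᵀ = -Q := by ext i k; fin_cases i <;> fin_cases k <;> simp [Q]
    rw [transpose_sub, transpose_mul, transpose_mul, h₂₂, h₂₁, h₁₂, hQ]
    simp only [Matrix.neg_mul, Matrix.mul_neg, neg_neg, neg_sub, Matrix.mul_assoc]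
    abel
  · conv_lhs => rw [← fromBlocks_toBlocks C]
    rw [det_fromBlocks₁₁, show ⅟C.toBlocks₁₁ = Q from rfl, hP, det_fin_two_of]
    ring

theorem isSquare_det_of_transpose_eq_neg_fin (h2 : (2 : F) ≠ 0) :
    ∀ {n : ℕ} {A : Matrix (Fin n) (Fin n) F}, Aᵀ = -A → IsSquare A.det
  | 0, A, _ => by simp
  | 1, A, hA => ⟨0, by simp [diag_eq_zero_of_transpose_eq_neg h2 hA]⟩
  | m + 2, A, hA => by
    by_cases hrow : ∀ j, A 0 j = 0
    · rw [det_eq_zero_of_row_eq_zero 0 hrow]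
      exact ⟨0, (mul_zero 0).symm⟩
    push Not at hrow
    obtain ⟨j, hj⟩ := hrow
    have hj0 : j ≠ 0 := by rintro rfl; exact hj (diag_eq_zero_of_transpose_eq_neg h2 hA 0)
    -- Move the pivot `A 0 j` to position `(0, 1)`, then split off the first two indices.
    let e : Fin 2 ⊕ Fin m ≃ Fin (m + 2) :=
      (finSumFinEquiv.trans (finCongr (Nat.add_comm 2 m))).trans (Equiv.swap 1 j)
    have he0 : e (.inl 0) = 0 :=
      Equiv.swap_apply_of_ne_of_ne (a := (1 : Fin (m + 2))) (by simp) hj0.symm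
    have he1 : e (.inl 1) = j := Equiv.swap_apply_left (1 : Fin (m + 2)) j
    have hC : (A.submatrix e e)ᵀ = -A.submatrix e e := by
      rw [transpose_submatrix, hA]; rfl
    obtain ⟨S, hS, hdet⟩ := exists_transpose_eq_neg_det_eq_sq_mul h2 hC
      (by simpa [he0, he1] using hj)
    rw [← det_submatrix_equiv_self e, hdet]
    exact (IsSquare.sq _).mul (isSquare_det_of_transpose_eq_neg_fin h2 hS)

theorem isSquare_det_of_transpose_eq_neg {n : Type*} [Fintype n] [DecidableEq n]
    (h2 : (2 : F) ≠ 0) {A : Matrix n n F} (hA : Aᵀ = -A) : IsSquare A.det := by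
  let e := (Fintype.equivFin n).symm
  rw [← det_submatrix_equiv_self e]
  exact isSquare_det_of_transpose_eq_neg_fin h2 (by rw [transpose_submatrix, hA]; rfl)

variable {n : Type*} [Fintype n] [DecidableEq n]

theorem transpose_mul_eq_neg_mul {G M : Matrix n n F} (hM : M * M = -1)
    (hMG : Mᵀ * G * M = G) : Mᵀ * G = -(G * M) := by
  have h : Mᵀ * G * (M * M) = G * M := by rw [← Matrix.mul_assoc, hMG]
  rw [hM, Matrix.mul_neg, Matrix.mul_one] at h
  rw [← h, neg_neg]

/-- `(1 + M)² = 2M` and `(1 + M)(1 - M) = 2`, while `G` intertwines `(1 + M)ᵀ`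
with `1 - M`, so `det (1 + M) = det (1 - M)` and hence `2ⁿ det M = 2ⁿ`. -/
theorem det_eq_one_of_mul_self_eq_neg_one (h2 : (2 : F) ≠ 0) {G M : Matrix n n F}
    (hG : G.det ≠ 0) (hM : M * M = -1) (hMG : Mᵀ * G * M = G) : M.det = 1 := by
  have hintertwine : (1 + M)ᵀ * G = G * (1 - M) := by
    rw [transpose_add, transpose_one, Matrix.add_mul, transpose_mul_eq_neg_mul hM hMG,
      Matrix.one_mul, Matrix.mul_sub, Matrix.mul_one, sub_eq_add_neg]
  have hdet : (1 + M).det = (1 - M).det := by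
    have h := congrArg det hintertwine
    rw [det_mul, det_mul, det_transpose, mul_comm] at h
    exact mul_left_cancel₀ hG h
  have hsq : (1 + M) * (1 + M) = (2 : F) • M := by
    rw [Matrix.add_mul, Matrix.mul_add, Matrix.mul_add, hM, two_smul]; noncomm_ring
  have hprod : (1 + M) * (1 - M) = (2 : F) • 1 := by
    rw [Matrix.add_mul, Matrix.mul_sub, Matrix.mul_sub, hM, two_smul]; noncomm_ring
  have h2n : (2 : F) ^ Fintype.card n ≠ 0 := pow_ne_zero _ h2
  refine mul_left_cancel₀ h2n ?_
  calc (2 : F) ^ Fintype.card n * M.det = (1 + M).det * (1 + M).det := by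
        rw [← det_mul, hsq, det_smul]
    _ = (1 + M).det * (1 - M).det := by rw [hdet]
    _ = (2 : F) ^ Fintype.card n * 1 := by rw [← det_mul, hprod, det_smul, det_one]

theorem even_card_and_isSquare_det_of_isometry (h2 : (2 : F) ≠ 0) {G M : Matrix n n F}
    (hG : G.IsSymm) (hGdet : G.det ≠ 0) (hM : M * M = -1) (hMG : Mᵀ * G * M = G) :
    Even (Fintype.card n) ∧ IsSquare G.det := by
  have hskew : (G * M)ᵀ = -(G * M) := by
    rw [transpose_mul, hG.eq, transpose_mul_eq_neg_mul hM hMG]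
  have hdet : (G * M).det = G.det := by
    rw [det_mul, det_eq_one_of_mul_self_eq_neg_one h2 hGdet hM hMG, mul_one]
  exact ⟨even_card_of_transpose_eq_neg h2 hskew (hdet ▸ hGdet),
    hdet ▸ isSquare_det_of_transpose_eq_neg h2 hskew⟩

end Matrix

namespace LinearMap.BilinForm

theorem even_card_and_isSquare_det_toMatrix_of_isometry {F V ι : Type*} [Field F]
    [AddCommGroup V] [Module F V] [Fintype ι] [DecidableEq ι] (h2 : (2 : F) ≠ 0)
    {B : LinearMap.BilinForm F V} (hB : B.IsSymm) (hnd : B.Nondegenerate) {X : Module.End F V}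
    (hX : B.comp X X = B) (hX2 : X * X = -1) (b : Module.Basis ι F V) :
    Even (Fintype.card ι) ∧ IsSquare (toMatrix b B).det := by
  refine Matrix.even_card_and_isSquare_det_of_isometry h2 ((isSymm_toMatrix_iff_isSymm b).mpr hB)
    ((nondegenerate_iff_det_ne_zero b).mp hnd) (M := LinearMap.toMatrix b b X) ?_ ?_
  · rw [← LinearMap.toMatrix_mul, hX2, map_neg, LinearMap.toMatrix_one]
  · rw [← toMatrix_comp, hX]

end LinearMap.BilinForm

theorem statement_13_general (q : ℕ) (hq : Odd q)
    (F : Type*) [Field F] [Fintype F] (hcard : Fintype.card F = q)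
    (V : Type*) [AddCommGroup V] [Module F V] [FiniteDimensional F V]
    (B : LinearMap.BilinForm F V)
    (hsymm : ∀ u v : V, B u v = B v u)
    (hnd : ∀ u : V, (∀ v : V, B u v = 0) → u = 0)
    (X : V ≃ₗ[F] V) (hiso : ∀ u v : V, B (X u) (X v) = B u v)
    (hX2 : ∀ v : V, X (X v) = -v) :
    Even (Module.finrank F V) ∧
      ∀ (ι : Type) [Fintype ι] [DecidableEq ι] (b : Module.Basis ι F V),
        ∃ c : F, c ≠ 0 ∧ (Matrix.of fun i j => B (b i) (b j)).det = c ^ 2 := by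
  have h2 : (2 : F) ≠ 0 := Ring.two_ne_zero fun h => by
    have := FiniteField.even_card_of_char_two h
    rw [hcard, Nat.odd_iff.mp hq] at this
    exact one_ne_zero this
  have hB : B.IsSymm := ⟨hsymm⟩
  have hBnd : B.Nondegenerate := ⟨hnd, fun v h => hnd v fun u => (hsymm v u).trans (h u)⟩
  have hX : B.comp X.toLinearMap X.toLinearMap = B := by ext u v; exact hiso u v
  have hXX : X.toLinearMap * X.toLinearMap = -1 := by ext v; exact hX2 v
  have key := fun {ι : Type} [Fintype ι] [DecidableEq ι] (b : Module.Basis ι F V) =>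
    LinearMap.BilinForm.even_card_and_isSquare_det_toMatrix_of_isometry h2 hB hBnd hX hXX b
  refine ⟨by simpa using (key (Module.finBasis F V)).1, fun ι _ _ b => ?_⟩
  obtain ⟨c, hc⟩ := (key b).2
  have hdet := (LinearMap.BilinForm.nondegenerate_iff_det_ne_zero b).mp hBnd
  refine ⟨c, fun h => hdet (by rw [hc, h, mul_zero]), ?_⟩
  have hgram : LinearMap.BilinForm.toMatrix b B = .of fun i j => B (b i) (b j) :=
    Matrix.ext fun i j => LinearMap.BilinForm.toMatrix_apply b B i j
  rw [← hgram, hc, sq]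

/-- Let `q` be an odd prime power and `(V, B)` a finite-dimensional F_q-vector space with a
nondegenerate symmetric bilinear form.  If there is an isometry `X` of `(V, B)` with
`X ∘ X = -id`, then `dim V` is even and the discriminant of `B` is trivial: for every basis,
the determinant of the Gram matrix is a nonzero square. -/
theorem statement_13 (q : ℕ) (hq : Odd q) (hpp : IsPrimePow q)
    (F : Type*) [Field F] [Fintype F] (hcard : Fintype.card F = q)
    (V : Type*) [AddCommGroup V] [Module F V] [FiniteDimensional F V]
    (B : LinearMap.BilinForm F V)
    (hsymm : ∀ u v : V, B u v = B v u)
    (hnd : ∀ u : V, (∀ v : V, B u v = 0) → u = 0)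
    (X : V ≃ₗ[F] V) (hiso : ∀ u v : V, B (X u) (X v) = B u v)
    (hX2 : ∀ v : V, X (X v) = -v) :
    Even (Module.finrank F V) ∧
      ∀ (ι : Type) [Fintype ι] [DecidableEq ι] (b : Module.Basis ι F V),
        ∃ c : F, c ≠ 0 ∧ (Matrix.of fun i j => B (b i) (b j)).det = c ^ 2 :=
  statement_13_general q hq F hcard V B hsymm hnd X hiso hX2
end
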